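/- There is a universal constant C > 0 such that for every pure strategy S for G_Rad^{(n)} and every ε ∈ {−1,1}^{n×n}: ( Σ_{i,j=1}^n ‖∂_{ij} Φ^i_S(ε)‖_op² )^{1/2} ≤ ( Σ_{i,j=1}^n (1/4)·‖ Ṽ_ε ⊗ W̃_ε − Ṽ_{ε̄^{ij}} ⊗ W̃_{ε̄^{ij}} ‖_op² )^{1/2} + C/n, where ε̄^{ij} denotes ε with its (i,j) entry flipped and Ṽ_ε ⊗ W̃_ε is viewed as a linear map from ℂ^{k̃} ⊗ ℂ^{k̃} to (ℂ^n ⊗ ℂ^r) ⊗ (ℂ^n ⊗ ℂ^r). -/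

import Mathlib

open scoped BigOperators

noncomputable section

abbrev ES (ι : Type) := EuclideanSpace ℂ ι

def sgn (b : Bool) : ℂ := if b then 1 else -1

def sgnR (b : Bool) : ℝ := if b then 1 else -1

/-- Uniform average of a real-valued function over a finite type. -/
def Eavg {α : Type} [Fintype α] (f : α → ℝ) : ℝ := (∑ x, f x) / (Fintype.card α : ℝ)

/-- Uniform average of a vector-valued function over a finite type. -/
def EavgV {α : Type} [Fintype α] {X : Type} [AddCommGroup X] [Module ℂ X] (f : α → X) : X :=
  (Fintype.card α : ℂ)⁻¹ • ∑ x, f x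

/-- The matrix of a continuous linear map between Euclidean spaces. -/
def matOf {ι κ : Type} [Fintype ι] [Fintype κ] [DecidableEq ι] (f : ES ι →L[ℂ] ES κ) :
    Matrix κ ι ℂ := Matrix.toEuclideanLin.symm (f : ES ι →ₗ[ℂ] ES κ)

/-- The continuous linear map between Euclidean spaces given by a matrix. -/
def ofMat {ι κ : Type} [Fintype ι] [Fintype κ] [DecidableEq ι] (M : Matrix κ ι ℂ) :
    ES ι →L[ℂ] ES κ := LinearMap.toContinuousLinearMap (Matrix.toEuclideanLin M)

/-- Tensor product of two (continuous) linear maps between Euclidean spaces, realized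
via the Kronecker product of their matrices. -/
def tensorCLM {ι₁ ι₂ κ₁ κ₂ : Type} [Fintype ι₁] [Fintype ι₂] [Fintype κ₁] [Fintype κ₂]
    [DecidableEq ι₁] [DecidableEq ι₂]
    (f : ES ι₁ →L[ℂ] ES κ₁) (g : ES ι₂ →L[ℂ] ES κ₂) :
    ES (ι₁ × ι₂) →L[ℂ] ES (κ₁ × κ₂) :=
  ofMat (Matrix.kroneckerMap (· * ·) (matOf f) (matOf g))

/-- The isometry `ℂ^k → ℂ^n ⊗ ℂ^n ⊗ ℂ^k`, `x ↦ e_i ⊗ e_j ⊗ x`. -/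
def embedAB {n k : ℕ} (i j : Fin n) : ES (Fin k) →L[ℂ] ES (Fin n × Fin n × Fin k) :=
  ofMat (Matrix.of fun p c => if p.1 = i ∧ p.2.1 = j ∧ p.2.2 = c then 1 else 0)

/-- `V|ij⟩ : ℂ^k → ℂ^{k̃}`, the map `x ↦ V(e_i ⊗ e_j ⊗ x)`. -/
def Vij {n k k' : ℕ} (V : ES (Fin n × Fin n × Fin k) →L[ℂ] ES (Fin k')) (i j : Fin n) :
    ES (Fin k) →L[ℂ] ES (Fin k') := V.comp (embedAB i j)

/-- `e_i^* ⊗ Id : ℂ^n ⊗ ℂ^r → ℂ^r`. -/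
def proj {n r : ℕ} (i : Fin n) : ES (Fin n × Fin r) →L[ℂ] ES (Fin r) :=
  ofMat (Matrix.of fun s p => if p.1 = i ∧ p.2 = s then 1 else 0)

/-- A pure strategy for the game `G_Rad^{(n)}` with dimensions `k, k', r`. -/
structure PureStrategy (n k k' r : ℕ) where
  V : ES (Fin n × Fin n × Fin k) →L[ℂ] ES (Fin k')
  W : ((Fin n × Fin n) → Bool) → ES (Fin k) →L[ℂ] ES (Fin k')
  Vt : ((Fin n × Fin n) → Bool) → ES (Fin k') →L[ℂ] ES (Fin n × Fin r)
  Wt : ((Fin n × Fin n) → Bool) → ES (Fin k') →L[ℂ] ES (Fin n × Fin r)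
  φ : ES (Fin k × Fin k)
  hV : ‖V‖ ≤ 1
  hW : ∀ ε, ‖W ε‖ ≤ 1
  hVt : ∀ ε, ‖Vt ε‖ ≤ 1
  hWt : ∀ ε, ‖Wt ε‖ ≤ 1
  hφ : ‖φ‖ = 1

/-- The value `ω(S)` of a pure strategy in `G_Rad^{(n)}`. -/
def value {n k k' r : ℕ} (S : PureStrategy n k k' r) : ℝ :=
  Eavg fun ε => ‖((n : ℂ) ^ 2)⁻¹ • ∑ ij : Fin n × Fin n, sgn (ε ij) •
    (tensorCLM ((proj ij.1).comp (S.Vt ε)) ((proj ij.2).comp (S.Wt ε)))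
      ((tensorCLM (Vij S.V ij.1 ij.2) (S.W ε)) S.φ)‖ ^ 2

/-- The assignment `Φ^i_S : {−1,1}^{n×n} → B(ℂ^k ⊗ ℂ^{k̃}, ℂ^r ⊗ ℂ^r)`. -/
def PhiI {n k k' r : ℕ} (S : PureStrategy n k k' r) (ε : (Fin n × Fin n) → Bool) :
    ES (Fin k × Fin k') →L[ℂ] ES (Fin r × Fin r) :=
  ((n : ℂ) ^ 2)⁻¹ • ∑ ij : Fin n × Fin n, sgn (ε ij) •
    ((tensorCLM ((proj ij.1).comp (S.Vt ε)) ((proj ij.2).comp (S.Wt ε))).comp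
      (tensorCLM (Vij S.V ij.1 ij.2) (ContinuousLinearMap.id ℂ (ES (Fin k')))))

/-- Flip the `p`-th sign of `ε`. -/
def flipAt {ι : Type} [DecidableEq ι] (ε : ι → Bool) (p : ι) : ι → Bool :=
  Function.update ε p (!(ε p))

/-- The regularity parameter `σ_Φ` of a map on the Boolean hypercube with values in a
normed space; `‖∂_pΦ(ε)‖ = ‖Φ(ε) − Φ(ε̄^p)‖/2`. -/
def sigma {ι : Type} [Fintype ι] [DecidableEq ι] {X : Type} [NormedAddCommGroup X]
    (Φ : (ι → Bool) → X) : ℝ :=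
  Real.log (Fintype.card ι) *
    Eavg fun ε => Real.sqrt (∑ p : ι, (‖Φ ε - Φ (flipAt ε p)‖ / 2) ^ 2)

/-- The type-2 constant with `m` vectors of a normed space. -/
def T2With (m : ℕ) (X : Type) [NormedAddCommGroup X] [NormedSpace ℝ X] : ℝ :=
  sInf {T : ℝ | 0 ≤ T ∧ ∀ x : Fin m → X,
    Real.sqrt (Eavg fun ε : Fin m → Bool => ‖∑ i, sgnR (ε i) • x i‖ ^ 2)
      ≤ T * Real.sqrt (∑ i, ‖x i‖ ^ 2)}

/-- `ĥ : ℂ^n ⊗ ℂ^{k̃} → ℂ^{r'}` determined by `ĥ(e_i ⊗ y) = (e_i^* ⊗ Id)(h y)`. -/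
def hat {n k' r' : ℕ} (h : ES (Fin k') →L[ℂ] ES (Fin n × Fin r')) :
    ES (Fin n × Fin k') →L[ℂ] ES (Fin r') :=
  ofMat (Matrix.of fun s p => matOf h (p.1, s) p.2)

/-- The norm `N` on `(ℂ^n ⊗ ℂ^{k̃}) ⊗ (ℂ^n ⊗ ℂ^{k̃})`. -/
def Nnorm {n k' : ℕ} (t : ES ((Fin n × Fin k') × (Fin n × Fin k'))) : ℝ :=
  sSup {s : ℝ | ∃ (r' : ℕ) (h g : ES (Fin k') →L[ℂ] ES (Fin n × Fin r')),
    ‖h‖ ≤ 1 ∧ ‖g‖ ≤ 1 ∧ s = ‖(tensorCLM (hat h) (hat g)) t‖}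

/-- `v ↦ e_i ⊗ e_j ⊗ v`, reordered into `(ℂ^n ⊗ ℂ^{k̃}) ⊗ (ℂ^n ⊗ ℂ^{k̃})`. -/
def embedPair {n k' : ℕ} (i j : Fin n) :
    ES (Fin k' × Fin k') →L[ℂ] ES ((Fin n × Fin k') × (Fin n × Fin k')) :=
  ofMat (Matrix.of fun p q => if p.1.1 = i ∧ p.2.1 = j ∧ p.1.2 = q.1 ∧ p.2.2 = q.2 then 1 else 0)

/-- The assignment `Φ^{ii}_S : {−1,1}^{n×n} → (ℂ^n ⊗ ℂ^{k̃}) ⊗ (ℂ^n ⊗ ℂ^{k̃})`. -/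
def PhiII {n k k' r : ℕ} (S : PureStrategy n k k' r) (ε : (Fin n × Fin n) → Bool) :
    ES ((Fin n × Fin k') × (Fin n × Fin k')) :=
  ((n : ℂ) ^ 2)⁻¹ • ∑ ij : Fin n × Fin n, sgn (ε ij) •
    embedPair ij.1 ij.2 ((tensorCLM (Vij S.V ij.1 ij.2) (S.W ε)) S.φ)

/-!
Flipping the sign `ε_p` changes `Φ^i_S(ε)` in two ways. The `p`-th summand changes sign, which
costs at most `2/n²`. Every summand also changes through `Ṽ_ε ⊗ W̃_ε`, which sits between the
contractions `e_i^* ⊗ e_j^*` and `V|ij⟩ ⊗ Id`; averaging the `n²` summands, this costs at most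
`‖Ṽ_ε ⊗ W̃_ε − Ṽ_{ε̄^p} ⊗ W̃_{ε̄^p}‖`. Hence `‖∂_pΦ^i_S(ε)‖ ≤ ½‖…‖ + 1/n²`, and Minkowski's
inequality in `ℓ²(n × n)` turns the `n²` error terms into `1/n`, so `C = 1` works.
-/

section OpNorm

variable {𝕜 E₁ E₂ E₃ E₄ : Type*} [NontriviallyNormedField 𝕜] [SeminormedAddCommGroup E₁]
  [SeminormedAddCommGroup E₂] [SeminormedAddCommGroup E₃] [SeminormedAddCommGroup E₄]
  [NormedSpace 𝕜 E₁] [NormedSpace 𝕜 E₂] [NormedSpace 𝕜 E₃] [NormedSpace 𝕜 E₄]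

theorem ContinuousLinearMap.opNorm_le_of_norm_sq_le {f : E₁ →L[𝕜] E₂} {c : ℝ} (hc : 0 ≤ c)
    (h : ∀ x, ‖f x‖ ^ 2 ≤ (c * ‖x‖) ^ 2) : ‖f‖ ≤ c :=
  f.opNorm_le_bound hc fun x => le_of_sq_le_sq (h x) (by positivity)

theorem ContinuousLinearMap.norm_comp_comp_le_of_norm_le_one {A : E₃ →L[𝕜] E₄}
    {B : E₁ →L[𝕜] E₂} (hA : ‖A‖ ≤ 1) (hB : ‖B‖ ≤ 1) (X : E₂ →L[𝕜] E₃) :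
    ‖A.comp (X.comp B)‖ ≤ ‖X‖ :=
  calc ‖A.comp (X.comp B)‖ ≤ ‖A‖ * (‖X‖ * ‖B‖) :=
        (A.opNorm_comp_le _).trans (by gcongr; exact X.opNorm_comp_le B)
    _ ≤ 1 * (‖X‖ * 1) := by gcongr
    _ = ‖X‖ := by ring

end OpNorm

theorem sum_norm_sq_apply_toLp_le {ι κ : Type} [Fintype ι] [Fintype κ] (f : ES ι →L[ℂ] ES κ)
    (v : ι → ℂ) : ∑ i, ‖f (WithLp.toLp 2 v) i‖ ^ 2 ≤ ‖f‖ ^ 2 * ∑ j, ‖v j‖ ^ 2 := by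
  have h := pow_le_pow_left₀ (norm_nonneg _) (f.le_opNorm (WithLp.toLp 2 v)) 2
  rwa [mul_pow, EuclideanSpace.norm_sq_eq, EuclideanSpace.norm_sq_eq] at h

theorem sqrt_sum_add_sq_le {ι : Type*} [Fintype ι] (a b : ι → ℝ) :
    Real.sqrt (∑ i, (a i + b i) ^ 2)
      ≤ Real.sqrt (∑ i, a i ^ 2) + Real.sqrt (∑ i, b i ^ 2) := by
  have h (x : ι → ℝ) : Real.sqrt (∑ i, x i ^ 2) = ‖(WithLp.toLp 2 x : EuclideanSpace ℝ ι)‖ := by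
    simp [EuclideanSpace.norm_eq]
  rw [show ∑ i, (a i + b i) ^ 2 = ∑ i, (a + b) i ^ 2 from rfl, h, h, h]
  exact norm_add_le _ _

section Matrix

variable {ι κ μ : Type} [Fintype ι] [Fintype κ] [Fintype μ] [DecidableEq ι]

theorem ofMat_apply (M : Matrix κ ι ℂ) (v : ES ι) (i : κ) : ofMat M v i = ∑ j, M i j * v j := by
  simp [ofMat, Matrix.toLpLin_apply, Matrix.mulVec, dotProduct]

theorem ofMat_matOf (f : ES ι →L[ℂ] ES κ) : ofMat (matOf f) = f := by
  ext v
  simp [ofMat, matOf]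

theorem ofMat_mul [DecidableEq κ] (M : Matrix μ κ ℂ) (N : Matrix κ ι ℂ) :
    ofMat (M * N) = (ofMat M).comp (ofMat N) := by
  ext v i
  simp [ofMat, Matrix.toLpLin_apply, Matrix.mulVec_mulVec]

theorem matOf_comp [DecidableEq κ] (f : ES κ →L[ℂ] ES μ) (g : ES ι →L[ℂ] ES κ) :
    matOf (f.comp g) = matOf f * matOf g :=
  Matrix.toLpLin_symm_comp 2 2 2 (f : ES κ →ₗ[ℂ] ES μ) (g : ES ι →ₗ[ℂ] ES κ)

end Matrix

section Tensor

variable {ι₁ ι₂ κ₁ κ₂ μ₁ μ₂ : Type} [Fintype ι₁] [Fintype ι₂] [Fintype κ₁] [Fintype κ₂]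
  [Fintype μ₁] [Fintype μ₂] [DecidableEq ι₁] [DecidableEq ι₂]

theorem tensorCLM_apply (f : ES ι₁ →L[ℂ] ES κ₁) (g : ES ι₂ →L[ℂ] ES κ₂) (x : ES (ι₁ × ι₂))
    (a : κ₁) (b : κ₂) :
    tensorCLM f g x (a, b) =
      g (WithLp.toLp 2 fun d => f (WithLp.toLp 2 fun c => x (c, d)) a) b := by
  conv_rhs => rw [← ofMat_matOf f, ← ofMat_matOf g]
  simp only [tensorCLM, ofMat_apply, Matrix.kroneckerMap_apply, Fintype.sum_prod_type,
    Finset.mul_sum]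
  rw [Finset.sum_comm]
  simp [mul_left_comm, mul_assoc]

theorem tensorCLM_comp [DecidableEq κ₁] [DecidableEq κ₂]
    (f : ES κ₁ →L[ℂ] ES μ₁) (g : ES κ₂ →L[ℂ] ES μ₂)
    (f' : ES ι₁ →L[ℂ] ES κ₁) (g' : ES ι₂ →L[ℂ] ES κ₂) :
    tensorCLM (f.comp f') (g.comp g') = (tensorCLM f g).comp (tensorCLM f' g') := by
  simp only [tensorCLM, matOf_comp, Matrix.mul_kronecker_mul, ofMat_mul]

theorem norm_tensorCLM_le (f : ES ι₁ →L[ℂ] ES κ₁) (g : ES ι₂ →L[ℂ] ES κ₂) :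
    ‖tensorCLM f g‖ ≤ ‖f‖ * ‖g‖ := by
  refine ContinuousLinearMap.opNorm_le_of_norm_sq_le (by positivity) fun x => ?_
  calc ‖tensorCLM f g x‖ ^ 2
      = ∑ a, ∑ b, ‖g (WithLp.toLp 2 fun d => f (WithLp.toLp 2 fun c => x (c, d)) a) b‖ ^ 2 := by
        simp only [EuclideanSpace.norm_sq_eq, Fintype.sum_prod_type, tensorCLM_apply]
    _ ≤ ∑ a, ‖g‖ ^ 2 * ∑ d, ‖f (WithLp.toLp 2 fun c => x (c, d)) a‖ ^ 2 :=
        Finset.sum_le_sum fun a _ => sum_norm_sq_apply_toLp_le g _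
    _ = ‖g‖ ^ 2 * ∑ d, ∑ a, ‖f (WithLp.toLp 2 fun c => x (c, d)) a‖ ^ 2 := by
        rw [← Finset.mul_sum, Finset.sum_comm]
    _ ≤ ‖g‖ ^ 2 * ∑ d, ‖f‖ ^ 2 * ∑ c, ‖x (c, d)‖ ^ 2 := by
        gcongr with d
        exact sum_norm_sq_apply_toLp_le f _
    _ = (‖f‖ * ‖g‖ * ‖x‖) ^ 2 := by
        rw [mul_pow, mul_pow, EuclideanSpace.norm_sq_eq x, Fintype.sum_prod_type,
          Finset.sum_comm, ← Finset.mul_sum]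
        ring

end Tensor

theorem proj_apply {n r : ℕ} (i : Fin n) (y : ES (Fin n × Fin r)) (s : Fin r) :
    proj i y s = y (i, s) := by
  simp [proj, ofMat_apply, Fintype.sum_prod_type, ite_and]

theorem norm_proj_le {n r : ℕ} (i : Fin n) :
    ‖(proj i : ES (Fin n × Fin r) →L[ℂ] ES (Fin r))‖ ≤ 1 := by
  refine ContinuousLinearMap.opNorm_le_of_norm_sq_le zero_le_one fun y => ?_
  rw [one_mul, EuclideanSpace.norm_sq_eq, EuclideanSpace.norm_sq_eq y, Fintype.sum_prod_type]
  simp only [proj_apply]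
  exact Finset.single_le_sum (f := fun a => ∑ s, ‖y (a, s)‖ ^ 2) (fun _ _ => by positivity)
    (Finset.mem_univ i)

theorem norm_embedAB_apply {n k : ℕ} (i j : Fin n) (x : ES (Fin k)) :
    ‖embedAB (n := n) i j x‖ = ‖x‖ := by
  rw [← sq_eq_sq₀ (norm_nonneg _) (norm_nonneg _), EuclideanSpace.norm_sq_eq,
    EuclideanSpace.norm_sq_eq]
  simp [embedAB, ofMat_apply, Fintype.sum_prod_type, ite_and, apply_ite (fun z : ℂ => ‖z‖ ^ 2)]

theorem norm_Vij_le {n k k' : ℕ} (V : ES (Fin n × Fin n × Fin k) →L[ℂ] ES (Fin k'))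
    (i j : Fin n) : ‖Vij V i j‖ ≤ ‖V‖ :=
  (Vij V i j).opNorm_le_bound (norm_nonneg _) fun x => by
    simpa [Vij, norm_embedAB_apply] using V.le_opNorm (embedAB i j x)

theorem norm_sgn (b : Bool) : ‖sgn b‖ = 1 := by cases b <;> simp [sgn]

theorem sgn_not (b : Bool) : sgn (!b) = -sgn b := by cases b <;> simp [sgn]

section Flip

variable {ι X : Type} [DecidableEq ι] [SeminormedAddCommGroup X] [NormedSpace ℂ X]

theorem norm_sgn_smul_sub_flipAt_le (T : (ι → Bool) → ι → X) (ε : ι → Bool) (p q : ι) {d : ℝ}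
    (hT : ∀ η, ‖T η p‖ ≤ 1) (hd : ‖T ε q - T (flipAt ε p) q‖ ≤ d) :
    ‖sgn (ε q) • T ε q - sgn (flipAt ε p q) • T (flipAt ε p) q‖
      ≤ d + if q = p then 2 else 0 := by
  by_cases hqp : q = p
  · subst hqp
    rw [show flipAt ε q q = !ε q from Function.update_self .., sgn_not, neg_smul,
      sub_neg_eq_add, ← smul_add, norm_smul, norm_sgn, one_mul, if_pos rfl]
    linarith [norm_add_le (T ε q) (T (flipAt ε q) q), hT ε, hT (flipAt ε q),
      (norm_nonneg _).trans hd]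
  · rw [show flipAt ε p q = ε q from Function.update_of_ne hqp .., ← smul_sub, norm_smul,
      norm_sgn, one_mul, if_neg hqp, add_zero]
    exact hd

theorem norm_sum_sgn_smul_sub_flipAt_le [Fintype ι] (T : (ι → Bool) → ι → X) (ε : ι → Bool)
    (p : ι) {d : ℝ} (hT : ∀ η, ‖T η p‖ ≤ 1) (hd : ∀ q, ‖T ε q - T (flipAt ε p) q‖ ≤ d) :
    ‖∑ q, sgn (ε q) • T ε q - ∑ q, sgn (flipAt ε p q) • T (flipAt ε p) q‖
      ≤ Fintype.card ι * d + 2 := by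
  rw [← Finset.sum_sub_distrib]
  refine (norm_sum_le _ _).trans ?_
  refine (Finset.sum_le_sum fun q _ => norm_sgn_smul_sub_flipAt_le T ε p q hT (hd q)).trans ?_
  simp [Finset.sum_add_distrib]

end Flip

namespace PureStrategy

variable {n k k' r : ℕ} (S : PureStrategy n k k' r)

def PhiITerm (η : (Fin n × Fin n) → Bool) (q : Fin n × Fin n) :
    ES (Fin k × Fin k') →L[ℂ] ES (Fin r × Fin r) :=
  (tensorCLM (proj q.1) (proj q.2)).comp ((tensorCLM (S.Vt η) (S.Wt η)).comp
    (tensorCLM (Vij S.V q.1 q.2) (ContinuousLinearMap.id ℂ (ES (Fin k')))))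

theorem PhiI_eq_sum_PhiITerm (η : (Fin n × Fin n) → Bool) :
    PhiI S η = ((n : ℂ) ^ 2)⁻¹ • ∑ q, sgn (η q) • S.PhiITerm η q := by
  simp only [PhiI, PhiITerm, tensorCLM_comp, ContinuousLinearMap.comp_assoc]

theorem norm_tensorCLM_proj_le (q : Fin n × Fin n) :
    ‖tensorCLM (proj (r := r) q.1) (proj (r := r) q.2)‖ ≤ 1 :=
  (norm_tensorCLM_le _ _).trans (mul_le_one₀ (norm_proj_le _) (norm_nonneg _) (norm_proj_le _))

theorem norm_tensorCLM_Vij_id_le (q : Fin n × Fin n) :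
    ‖tensorCLM (Vij S.V q.1 q.2) (ContinuousLinearMap.id ℂ (ES (Fin k')))‖ ≤ 1 :=
  (norm_tensorCLM_le _ _).trans (mul_le_one₀ ((norm_Vij_le _ _ _).trans S.hV)
    (norm_nonneg _) ContinuousLinearMap.norm_id_le)

theorem norm_tensorCLM_Vt_Wt_le (η : (Fin n × Fin n) → Bool) :
    ‖tensorCLM (S.Vt η) (S.Wt η)‖ ≤ 1 :=
  (norm_tensorCLM_le _ _).trans (mul_le_one₀ (S.hVt η) (norm_nonneg _) (S.hWt η))

theorem norm_PhiITerm_le (η : (Fin n × Fin n) → Bool) (q : Fin n × Fin n) :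
    ‖S.PhiITerm η q‖ ≤ 1 :=
  (ContinuousLinearMap.norm_comp_comp_le_of_norm_le_one (norm_tensorCLM_proj_le q)
    (S.norm_tensorCLM_Vij_id_le q) _).trans (S.norm_tensorCLM_Vt_Wt_le η)

theorem norm_PhiITerm_sub_le (η η' : (Fin n × Fin n) → Bool) (q : Fin n × Fin n) :
    ‖S.PhiITerm η q - S.PhiITerm η' q‖
      ≤ ‖tensorCLM (S.Vt η) (S.Wt η) - tensorCLM (S.Vt η') (S.Wt η')‖ := by
  rw [PhiITerm, PhiITerm, ← ContinuousLinearMap.comp_sub, ← ContinuousLinearMap.sub_comp]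
  exact ContinuousLinearMap.norm_comp_comp_le_of_norm_le_one (norm_tensorCLM_proj_le q)
    (S.norm_tensorCLM_Vij_id_le q) _

theorem norm_PhiI_sub_flipAt_le (ε : (Fin n × Fin n) → Bool) (p : Fin n × Fin n) :
    ‖PhiI S ε - PhiI S (flipAt ε p)‖
      ≤ ‖tensorCLM (S.Vt ε) (S.Wt ε) - tensorCLM (S.Vt (flipAt ε p)) (S.Wt (flipAt ε p))‖
        + 2 / (n : ℝ) ^ 2 := by
  have hn : (0 : ℝ) < n := Nat.cast_pos.2 p.1.pos
  have key := norm_sum_sgn_smul_sub_flipAt_le S.PhiITerm ε p (S.norm_PhiITerm_le · p)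
    (S.norm_PhiITerm_sub_le ε (flipAt ε p))
  have hdiff : PhiI S ε - PhiI S (flipAt ε p) = ((n : ℂ) ^ 2)⁻¹ •
      (∑ q, sgn (ε q) • S.PhiITerm ε q
        - ∑ q, sgn (flipAt ε p q) • S.PhiITerm (flipAt ε p) q) := by
    rw [PhiI_eq_sum_PhiITerm, PhiI_eq_sum_PhiITerm, smul_sub]
  rw [hdiff, norm_smul, norm_inv, norm_pow, Complex.norm_natCast]
  calc _ ≤ ((n : ℝ) ^ 2)⁻¹ * ((n : ℝ) ^ 2 * ‖tensorCLM (S.Vt ε) (S.Wt ε)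
          - tensorCLM (S.Vt (flipAt ε p)) (S.Wt (flipAt ε p))‖ + 2) := by
        gcongr
        simpa [sq] using key
    _ = _ := by field_simp

end PureStrategy

/-- there is a universal constant `C > 0` such that for every pure strategy
`S` for `G_Rad^{(n)}` and every sign matrix `ε`:
`(Σ_{ij} ‖∂_{ij}Φ^i_S(ε)‖_op²)^{1/2}
  ≤ (Σ_{ij} (1/4)·‖Ṽ_ε ⊗ W̃_ε − Ṽ_{ε̄^{ij}} ⊗ W̃_{ε̄^{ij}}‖_op²)^{1/2} + C/n`. -/
theorem statement14 :
    ∃ C : ℝ, 0 < C ∧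
      ∀ (n k k' r : ℕ), 2 ≤ n → 1 ≤ k → 1 ≤ k' → 1 ≤ r →
        ∀ (S : PureStrategy n k k' r) (ε : (Fin n × Fin n) → Bool),
          Real.sqrt (∑ ij : Fin n × Fin n,
              (‖PhiI S ε - PhiI S (flipAt ε ij)‖ / 2) ^ 2)
            ≤ Real.sqrt (∑ ij : Fin n × Fin n,
                (1 / 4 : ℝ) * ‖tensorCLM (S.Vt ε) (S.Wt ε)
                  - tensorCLM (S.Vt (flipAt ε ij)) (S.Wt (flipAt ε ij))‖ ^ 2)
              + C / n := by
  refine ⟨1, one_pos, fun n k k' r _ _ _ _ S ε => ?_⟩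
  set D := fun ij => ‖tensorCLM (S.Vt ε) (S.Wt ε)
    - tensorCLM (S.Vt (flipAt ε ij)) (S.Wt (flipAt ε ij))‖
  have hterm (ij : Fin n × Fin n) :
      ‖PhiI S ε - PhiI S (flipAt ε ij)‖ / 2 ≤ D ij / 2 + 1 / (n : ℝ) ^ 2 := by
    have := S.norm_PhiI_sub_flipAt_le ε ij
    rw [show (2 : ℝ) / n ^ 2 = 2 * (1 / n ^ 2) by ring] at this
    linarith
  have hconst : Real.sqrt (∑ _ij : Fin n × Fin n, (1 / (n : ℝ) ^ 2) ^ 2) = 1 / n := by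
    rw [Finset.sum_const, Finset.card_univ, Fintype.card_prod, Fintype.card_fin, nsmul_eq_mul,
      show ((n * n : ℕ) : ℝ) * (1 / (n : ℝ) ^ 2) ^ 2 = (1 / n) ^ 2 by push_cast; field_simp,
      Real.sqrt_sq (by positivity)]
  calc _ ≤ Real.sqrt (∑ ij, (D ij / 2 + 1 / (n : ℝ) ^ 2) ^ 2) :=
        Real.sqrt_le_sqrt (Finset.sum_le_sum fun ij _ =>
          pow_le_pow_left₀ (by positivity) (hterm ij) 2)
    _ ≤ Real.sqrt (∑ ij, (D ij / 2) ^ 2)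
          + Real.sqrt (∑ _ij : Fin n × Fin n, (1 / (n : ℝ) ^ 2) ^ 2) :=
        sqrt_sum_add_sq_le _ _
    _ = _ := by
        rw [hconst]
        congr 2
        exact Finset.sum_congr rfl fun ij _ => by ring

end
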